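/- arXiv:2001.02035 — 10 statements merged into one kernel-verified Lean document; each statement's English description precedes it below -/
import Mathlib

section
/- For integers a > b ≥ 2, the strict inequality (a!)^b · b! > (b!)^a · a! holds. -/
/-! The inequality says `(b!)^(1/(b-1)) < (a!)^(1/(a-1))`, so it is enough to see that
`n ↦ (n!)^(1/(n-1))` strictly increases for `n ≥ 2`. Passing from `n` to `n + 1` multiplies
`n!` by `n + 1`, which beats the current value since `n! ≤ n^(n-1) < (n+1)^(n-1)`. -/

open Nat

theorem Nat.factorial_le_pow_pred (n : ℕ) : n ! ≤ n ^ (n - 1) := by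
  cases n with
  | zero => rfl
  | succ k =>
    calc (k + 1)! = (k + 1).descFactorial (k + 1) := (descFactorial_self _).symm
      _ = (k + 1).descFactorial k := by rw [descFactorial_succ, add_tsub_cancel_left, one_mul]
      _ ≤ (k + 1) ^ k := descFactorial_le_pow _ _

theorem Nat.factorial_pow_lt_factorial_succ_pow {b n : ℕ} (hb : 2 ≤ b) (hbn : b ≤ n)
    (h : b ! ^ (n - 1) ≤ n ! ^ (b - 1)) : b ! ^ n < (n + 1)! ^ (b - 1) := by
  have hfac : b ! < (n + 1) ^ (b - 1) :=
    (factorial_le_pow_pred b).trans_lt (Nat.pow_lt_pow_left (by omega) (by omega))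
  calc b ! ^ n = b ! ^ (n - 1) * b ! := (pow_sub_one_mul (by omega) _).symm
    _ < n ! ^ (b - 1) * (n + 1) ^ (b - 1) := Nat.mul_lt_mul_of_le_of_lt h hfac (by positivity)
    _ = (n + 1)! ^ (b - 1) := by rw [← mul_pow, factorial_succ, mul_comm]

theorem Nat.factorial_pow_pred_lt {a b : ℕ} (hb : 2 ≤ b) (hab : b < a) :
    b ! ^ (a - 1) < a ! ^ (b - 1) := by
  induction a, hab using Nat.le_induction with
  | base => exact factorial_pow_lt_factorial_succ_pow hb le_rfl le_rfl
  | succ n hbn ih => exact factorial_pow_lt_factorial_succ_pow hb (le_of_succ_le hbn) ih.le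

theorem stmt_1 (a b : ℕ) (hb : 2 ≤ b) (hab : b < a) :
    (Nat.factorial b) ^ a * Nat.factorial a < (Nat.factorial a) ^ b * Nat.factorial b := by
  have hpow := factorial_pow_pred_lt hb hab
  calc b ! ^ a * a ! = b ! ^ (a - 1) * (b ! * a !) := by
        rw [← mul_assoc, pow_sub_one_mul (by omega)]
    _ < a ! ^ (b - 1) * (b ! * a !) := Nat.mul_lt_mul_of_pos_right hpow (by positivity)
    _ = a ! ^ b * b ! := by rw [mul_comm (b !), ← mul_assoc, pow_sub_one_mul (by omega)]
end

section
/- Let m > 1 be an integer and suppose m = a₁b₁ = a₂b₂ with a₁, a₂, b₁, b₂ integers at least 2, b₁ ≥ a₁, b₂ ≥ a₂, and a₁ ≤ a₂. Then (b₁!)^{a₁} · a₁! ≥ (b₂!)^{a₂} · a₂!, with equality if and only if a₁ = a₂ and b₁ = b₂. -/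
/-!
Write `a₂ = a₁ + k` and `b₁ = b₂ + d`; equal products give `a₁ * d = k * b₂`. Since
`a₂! ≤ a₁! * (b₂ + 1) ^ k`, the left side is at most `b₂! ^ a₁ * a₁! * (b₂ + 1)! ^ k`, and
`(b₂ + 1)! < (b₂ + 1) ^ b₂` makes this strictly smaller than
`b₂! ^ a₁ * a₁! * (b₂ + 1) ^ (d * a₁) ≤ b₁! ^ a₁ * a₁!`.
-/

open Nat

theorem Nat.factorial_add_le_factorial_mul_pow (a k : ℕ) : (a + k)! ≤ a ! * (a + k) ^ k := by
  rw [← Nat.factorial_mul_descFactorial (Nat.le_add_left k a), Nat.add_sub_cancel]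
  exact Nat.mul_le_mul_left _ (Nat.descFactorial_le_pow _ _)

theorem Nat.factorial_succ_lt_pow {n : ℕ} (hn : 2 ≤ n) : (n + 1)! < (n + 1) ^ n := by
  have h := Nat.factorial_mul_descFactorial (Nat.le_add_right n 1)
  rw [Nat.add_sub_cancel_left, Nat.factorial_one, one_mul] at h
  exact h ▸ Nat.descFactorial_lt_pow n.succ_ne_zero hn

theorem Nat.factorial_pow_mul_factorial_lt {a₁ b₁ a₂ b₂ : ℕ} (h : a₁ * b₁ = a₂ * b₂)
    (ha : a₁ < a₂) (hab : a₂ ≤ b₂ + 1) (hb : 2 ≤ b₂) :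
    b₂ ! ^ a₂ * a₂ ! < b₁ ! ^ a₁ * a₁ ! := by
  have hb₂₁ : b₂ ≤ b₁ := by
    by_contra! hlt
    exact absurd h (Nat.mul_lt_mul_of_le_of_lt ha.le hlt (by omega)).ne
  obtain ⟨k, rfl⟩ := Nat.exists_eq_add_of_le ha.le
  obtain ⟨d, rfl⟩ := Nat.exists_eq_add_of_le hb₂₁
  have hk : 0 < k := by omega
  have hexp : b₂ * k = d * a₁ := by linarith
  calc b₂ ! ^ (a₁ + k) * (a₁ + k)!
      ≤ b₂ ! ^ (a₁ + k) * (a₁ ! * (b₂ + 1) ^ k) := by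
        gcongr
        exact (Nat.factorial_add_le_factorial_mul_pow a₁ k).trans (by gcongr)
    _ = (b₂ ! ^ a₁ * a₁ !) * (b₂ + 1)! ^ k := by
        rw [Nat.factorial_succ, mul_comm (b₂ + 1), mul_pow]; ring
    _ < (b₂ ! ^ a₁ * a₁ !) * ((b₂ + 1) ^ b₂) ^ k := by
        gcongr
        exact Nat.factorial_succ_lt_pow hb
    _ = (b₂ ! * (b₂ + 1) ^ d) ^ a₁ * a₁ ! := by
        rw [← pow_mul, hexp, mul_pow, pow_mul]; ring
    _ ≤ (b₂ + d)! ^ a₁ * a₁ ! := by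
        gcongr
        exact Nat.factorial_mul_pow_le_factorial

theorem stmt_4_general (m a₁ b₁ a₂ b₂ : ℕ)
    (h₁ : m = a₁ * b₁) (h₂ : m = a₂ * b₂)
    (ha₁ : 2 ≤ a₁) (hb₂ : 2 ≤ b₂)
    (hba₂ : a₂ ≤ b₂) (haa : a₁ ≤ a₂) :
    (Nat.factorial b₂) ^ a₂ * Nat.factorial a₂ ≤ (Nat.factorial b₁) ^ a₁ * Nat.factorial a₁ ∧
    ((Nat.factorial b₁) ^ a₁ * Nat.factorial a₁ = (Nat.factorial b₂) ^ a₂ * Nat.factorial a₂ ↔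
      a₁ = a₂ ∧ b₁ = b₂) := by
  rcases haa.eq_or_lt with rfl | hlt
  · obtain rfl : b₁ = b₂ := Nat.eq_of_mul_eq_mul_left (by omega) (h₁.symm.trans h₂)
    simp
  · have hlt := Nat.factorial_pow_mul_factorial_lt (h₁.symm.trans h₂) hlt (by omega) hb₂
    exact ⟨hlt.le, iff_of_false hlt.ne' (by omega)⟩

theorem stmt_4 (m a₁ b₁ a₂ b₂ : ℕ) (hm : 1 < m)
    (h₁ : m = a₁ * b₁) (h₂ : m = a₂ * b₂)
    (ha₁ : 2 ≤ a₁) (ha₂ : 2 ≤ a₂) (hb₁ : 2 ≤ b₁) (hb₂ : 2 ≤ b₂)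
    (hba₁ : a₁ ≤ b₁) (hba₂ : a₂ ≤ b₂) (haa : a₁ ≤ a₂) :
    (Nat.factorial b₂) ^ a₂ * Nat.factorial a₂ ≤ (Nat.factorial b₁) ^ a₁ * Nat.factorial a₁ ∧
    ((Nat.factorial b₁) ^ a₁ * Nat.factorial a₁ = (Nat.factorial b₂) ^ a₂ * Nat.factorial a₂ ↔
      a₁ = a₂ ∧ b₁ = b₂) :=
  stmt_4_general m a₁ b₁ a₂ b₂ h₁ h₂ ha₁ hb₂ hba₂ haa
end

section
/- Let m > 1 be an integer, let p be the smallest prime divisor of m, and let d be a divisor of m with 1 < d < m. Then ((m/p)!)^p · p! ≥ ((m/d)!)^d · d!, with equality if and only if d = p. -/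
open Finset

lemma fact_mul_prod_Ioc (x : ℕ) : ∀ y, x ≤ y → x.factorial * ∏ i ∈ Finset.Ioc x y, i = y.factorial := by
  intro y
  induction y with
  | zero => intro h; interval_cases x; simp
  | succ n ih =>
    intro h
    rcases Nat.lt_or_ge x (n+1) with h'|h'
    · rw [Finset.prod_Ioc_succ_top (by omega), ← mul_assoc, ih (by omega),
        Nat.factorial_succ, mul_comm]
    · have hx : x = n+1 := le_antisymm h h'
      subst hx; simp

lemma fact_le_pow_pred (a1 : ℕ) : (a1+1).factorial ≤ (a1+1) ^ a1 := by
  have h1 := fact_mul_prod_Ioc 1 (a1+1) (by omega)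
  have h := Finset.prod_le_pow_card (Finset.Ioc 1 (a1+1)) id (a1+1)
    (fun i hi => (Finset.mem_Ioc.mp hi).2)
  have hc : (Finset.Ioc 1 (a1+1)).card = a1 := by rw [Nat.card_Ioc]; omega
  rw [hc] at h
  calc (a1+1).factorial = ∏ i ∈ Ioc 1 (a1+1), i := by
        rw [← h1, Nat.factorial_one, one_mul]
    _ ≤ (a1+1) ^ a1 := h

-- Case d ≤ a : here a = a1+1, d = p+t+1, b = a1+1+s
lemma case1 (p a1 s t : ℕ) (hda : p + t + 1 ≤ a1 + 1)
    (hm : (a1+1) * (p + t + 1) = (a1 + 1 + s) * p) :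
    (a1+1).factorial ^ (p + t + 1) * (p + t + 1).factorial
      < (a1 + 1 + s).factorial ^ p * p.factorial := by
  have hPb := fact_mul_prod_Ioc (a1+1) (a1+1+s) (by omega)
  have hQ := fact_mul_prod_Ioc p (p+t+1) (by omega)
  have Pl : ((a1+1)+1) ^ s ≤ ∏ i ∈ Ioc (a1+1) (a1+1+s), i := by
    have h := Finset.pow_card_le_prod (Finset.Ioc (a1+1) (a1+1+s)) id ((a1+1)+1)
      (fun i hi => by have := (Finset.mem_Ioc.mp hi).1; simp only [id]; omega)
    have hc : (Finset.Ioc (a1+1) (a1+1+s)).card = s := by rw [Nat.card_Ioc]; omega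
    rwa [hc] at h
  have Qu : (∏ i ∈ Ioc p (p+t+1), i) ≤ (a1+1) ^ (t+1) := by
    have h := Finset.prod_le_pow_card (Finset.Ioc p (p+t+1)) id (a1+1)
      (fun i hi => by have := (Finset.mem_Ioc.mp hi).2; simp only [id]; omega)
    have hc : (Finset.Ioc p (p+t+1)).card = t+1 := by rw [Nat.card_Ioc]; omega
    rwa [hc] at h
  have key : (a1+1).factorial ^ (t+1) * ∏ i ∈ Ioc p (p+t+1), i
      < (∏ i ∈ Ioc (a1+1) (a1+1+s), i) ^ p := by
    have e1 : a1 * (t+1) + (t+1) = s * p := by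
      have hmZ : ((a1:ℤ)+1) * (p + t + 1) = ((a1:ℤ) + 1 + s) * p := by exact_mod_cast hm
      zify
      linear_combination hmZ
    calc (a1+1).factorial ^ (t+1) * ∏ i ∈ Ioc p (p+t+1), i
        ≤ (((a1+1) ^ a1) ^ (t+1)) * (a1+1) ^ (t+1) :=
          Nat.mul_le_mul (Nat.pow_le_pow_left (fact_le_pow_pred a1) _) Qu
      _ = (a1+1) ^ (a1 * (t+1) + (t+1)) := by rw [← pow_mul, ← pow_add]
      _ < ((a1+1)+1) ^ (a1 * (t+1) + (t+1)) :=
          Nat.pow_lt_pow_left (by omega) (Nat.add_pos_right _ (by omega)).ne'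
      _ = ((a1+1)+1) ^ (s * p) := by rw [e1]
      _ = (((a1+1)+1) ^ s) ^ p := by rw [pow_mul]
      _ ≤ (∏ i ∈ Ioc (a1+1) (a1+1+s), i) ^ p := Nat.pow_le_pow_left Pl p
  calc (a1+1).factorial ^ (p+t+1) * (p+t+1).factorial
      = ((a1+1).factorial ^ p * p.factorial) *
          ((a1+1).factorial ^ (t+1) * ∏ i ∈ Ioc p (p+t+1), i) := by
        rw [← hQ, show p+t+1 = p + (t+1) from by omega, pow_add]; ring
    _ < ((a1+1).factorial ^ p * p.factorial) * (∏ i ∈ Ioc (a1+1) (a1+1+s), i) ^ p := by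
        exact mul_lt_mul_of_pos_left key (by positivity)
    _ = (a1+1+s).factorial ^ p * p.factorial := by
        rw [← hPb, mul_pow]; ring

-- Case a < d : p = q+2, a = q+c+2, d = q+c+u+3, b = q+c+u+v+3
lemma case2 (q c u v : ℕ)
    (hm : (q+c+2) * (q+c+u+3) = (q+c+u+v+3) * (q+2)) :
    (q+c+2).factorial ^ (q+c+u+3) * (q+c+u+3).factorial
      < (q+c+u+v+3).factorial ^ (q+2) * (q+2).factorial := by
  have hP1 := fact_mul_prod_Ioc (q+c+2) (q+c+u+3) (by omega)
  have hP2 := fact_mul_prod_Ioc (q+c+u+3) (q+c+u+v+3) (by omega)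
  have hR := fact_mul_prod_Ioc (q+2) (q+c+2) (by omega)
  have P1l : (q+c+3) ^ (u+1) ≤ ∏ i ∈ Ioc (q+c+2) (q+c+u+3), i := by
    have h := Finset.pow_card_le_prod (Finset.Ioc (q+c+2) (q+c+u+3)) id (q+c+3)
      (fun i hi => by have := (Finset.mem_Ioc.mp hi).1; simp only [id]; omega)
    have hc : (Finset.Ioc (q+c+2) (q+c+u+3)).card = u+1 := by rw [Nat.card_Ioc]; omega
    rwa [hc] at h
  have P2l : (q+c+3) ^ v ≤ ∏ i ∈ Ioc (q+c+u+3) (q+c+u+v+3), i := by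
    have h := Finset.pow_card_le_prod (Finset.Ioc (q+c+u+3) (q+c+u+v+3)) id (q+c+3)
      (fun i hi => by have := (Finset.mem_Ioc.mp hi).1; simp only [id]; omega)
    have hc : (Finset.Ioc (q+c+u+3) (q+c+u+v+3)).card = v := by rw [Nat.card_Ioc]; omega
    rwa [hc] at h
  have Ru : (∏ i ∈ Ioc (q+2) (q+c+2), i) ≤ (q+c+2) ^ c := by
    have h := Finset.prod_le_pow_card (Finset.Ioc (q+2) (q+c+2)) id (q+c+2)
      (fun i hi => by have := (Finset.mem_Ioc.mp hi).2; simp only [id]; omega)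
    have hc : (Finset.Ioc (q+2) (q+c+2)).card = c := by rw [Nat.card_Ioc]; omega
    rwa [hc] at h
  have haf : (q+c+2).factorial ≤ (q+c+2) ^ (q+c+1) := fact_le_pow_pred (q+c+1)
  have key : (q+c+2).factorial ^ (c+u+1) * ∏ i ∈ Ioc (q+2) (q+c+2), i
      < (∏ i ∈ Ioc (q+c+2) (q+c+u+3), i) ^ (q+1) *
        (∏ i ∈ Ioc (q+c+u+3) (q+c+u+v+3), i) ^ (q+2) := by
    have e2 : (q+c+1) * (c+u+1) + c = (u+1)*(q+1) + v*(q+2) := by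
      have hmZ : ((q:ℤ)+c+2) * (q+c+u+3) = ((q:ℤ)+c+u+v+3) * (q+2) := by exact_mod_cast hm
      zify
      linear_combination hmZ
    calc (q+c+2).factorial ^ (c+u+1) * ∏ i ∈ Ioc (q+2) (q+c+2), i
        ≤ (((q+c+2) ^ (q+c+1)) ^ (c+u+1)) * (q+c+2) ^ c :=
          Nat.mul_le_mul (Nat.pow_le_pow_left haf _) Ru
      _ = (q+c+2) ^ ((q+c+1) * (c+u+1) + c) := by rw [← pow_mul, ← pow_add]
      _ < (q+c+3) ^ ((q+c+1) * (c+u+1) + c) := by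
          apply Nat.pow_lt_pow_left (by omega)
          have : 0 < (q+c+1) * (c+u+1) := by positivity
          omega
      _ = (q+c+3) ^ ((u+1)*(q+1) + v*(q+2)) := by rw [e2]
      _ = ((q+c+3) ^ (u+1)) ^ (q+1) * ((q+c+3) ^ v) ^ (q+2) := by
          rw [← pow_mul, ← pow_mul, ← pow_add]
      _ ≤ _ := Nat.mul_le_mul (Nat.pow_le_pow_left P1l _) (Nat.pow_le_pow_left P2l _)
  have P1pos : 0 < ∏ i ∈ Ioc (q+c+2) (q+c+u+3), i :=
    Finset.prod_pos (fun i hi => by have := (Finset.mem_Ioc.mp hi).1; omega)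
  calc (q+c+2).factorial ^ (q+c+u+3) * (q+c+u+3).factorial
      = ((q+c+2).factorial ^ (q+2) * (q+2).factorial * ∏ i ∈ Ioc (q+c+2) (q+c+u+3), i) *
          ((q+c+2).factorial ^ (c+u+1) * ∏ i ∈ Ioc (q+2) (q+c+2), i) := by
        rw [← hP1, ← hR, show q+c+u+3 = (q+2) + (c+u+1) from by omega, pow_add]; ring
    _ < ((q+c+2).factorial ^ (q+2) * (q+2).factorial * ∏ i ∈ Ioc (q+c+2) (q+c+u+3), i) *
          ((∏ i ∈ Ioc (q+c+2) (q+c+u+3), i) ^ (q+1) *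
           (∏ i ∈ Ioc (q+c+u+3) (q+c+u+v+3), i) ^ (q+2)) := by
        exact mul_lt_mul_of_pos_left key (by positivity)
    _ = (q+c+u+v+3).factorial ^ (q+2) * (q+2).factorial := by
        rw [← hP2, ← hP1, mul_pow, mul_pow,
          show (q:ℕ)+2 = (q+1)+1 from rfl, pow_succ]
        ring

lemma core (p a d b : ℕ) (hp2 : 2 ≤ p) (hpa : p ≤ a) (hpd : p < d) (hm : a * d = b * p) :
    a.factorial ^ d * d.factorial < b.factorial ^ p * p.factorial := by
  have hab : a ≤ b := by
    have h1 : a * p ≤ b * p := by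
      calc a * p ≤ a * d := Nat.mul_le_mul_left a hpd.le
        _ = b * p := hm
    exact Nat.le_of_mul_le_mul_right h1 (by omega)
  rcases le_or_gt d a with hcase | hcase
  · -- d ≤ a
    obtain ⟨t, rfl⟩ : ∃ t, d = p + t + 1 := ⟨d - p - 1, by omega⟩
    obtain ⟨a1, rfl⟩ : ∃ a1, a = a1 + 1 := ⟨a - 1, by omega⟩
    obtain ⟨s, rfl⟩ : ∃ s, b = a1 + 1 + s := ⟨b - (a1+1), by omega⟩
    exact case1 p a1 s t (by omega) hm
  · -- a < d
    have hdb : d ≤ b := by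
      have h1 : d * p ≤ b * p := by
        calc d * p ≤ a * d := by rw [mul_comm]; exact Nat.mul_le_mul_right d hpa
          _ = b * p := hm
      exact Nat.le_of_mul_le_mul_right h1 (by omega)
    obtain ⟨q, rfl⟩ : ∃ q, p = q + 2 := ⟨p - 2, by omega⟩
    obtain ⟨c, rfl⟩ : ∃ c, a = q + c + 2 := ⟨a - q - 2, by omega⟩
    obtain ⟨u, rfl⟩ : ∃ u, d = q + c + u + 3 := ⟨d - (q+c+2) - 1, by omega⟩
    obtain ⟨v, rfl⟩ : ∃ v, b = q + c + u + v + 3 := ⟨b - (q+c+u+3), by omega⟩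
    exact case2 q c u v hm

theorem stmt_5 (m d : ℕ) (hm : 1 < m) (hd : d ∣ m) (hd1 : 1 < d) (hdm : d < m) :
    (Nat.factorial (m / d)) ^ d * Nat.factorial d ≤
      (Nat.factorial (m / m.minFac)) ^ m.minFac * Nat.factorial m.minFac ∧
    ((Nat.factorial (m / m.minFac)) ^ m.minFac * Nat.factorial m.minFac =
      (Nat.factorial (m / d)) ^ d * Nat.factorial d ↔ d = m.minFac) := by
  have hpp : m.minFac.Prime := Nat.minFac_prime (by omega)
  have hple : m.minFac ≤ d := Nat.minFac_le_of_dvd hd1 hd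
  by_cases hdp : d = m.minFac
  · subst hdp; exact ⟨le_refl _, by simp⟩
  · have hplt : m.minFac < d := lt_of_le_of_ne hple (Ne.symm hdp)
    have had : m / d * d = m := Nat.div_mul_cancel hd
    have hbp : m / m.minFac * m.minFac = m := Nat.div_mul_cancel (Nat.minFac_dvd m)
    have h2a : 2 ≤ m / d := by
      rcases Nat.lt_or_ge (m / d) 2 with h | h
      · interval_cases h' : (m / d) <;> omega
      · exact h
    have hpa : m.minFac ≤ m / d := Nat.minFac_le_of_dvd h2a (Nat.div_dvd_of_dvd hd)
    have hlt := core m.minFac (m / d) d (m / m.minFac) hpp.two_le hpa hplt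
      (by rw [had, hbp])
    exact ⟨hlt.le, ⟨fun h => absurd h.symm (Nat.ne_of_lt hlt), fun h => absurd h hdp⟩⟩
end

section
/- If n is a positive integer written as a sum of distinct powers of 2 (its binary expansion), and n₂ is the smallest of these powers (i.e. the 2-part of n), then for any multiset of powers of 2 summing to n there exists a sub-multiset summing to n₂. More precisely: if 0 ≤ a₁ ≤ ... ≤ a_r and ∑ 2^{a_i} = n, then some subset J of indices satisfies ∑_{i∈J} 2^{a_i} = n₂, where n₂ is the largest power of 2 dividing n. -/
theorem stmt_11 (n r : ℕ) (hn : 0 < n) (a : ℕ → ℕ)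
    (hmono : ∀ i j, i ≤ j → j < r → a i ≤ a j)
    (hsum : ∑ i ∈ Finset.range r, 2 ^ (a i) = n) :
    ∃ J ⊆ Finset.range r, ∑ i ∈ J, 2 ^ (a i) = 2 ^ (n.factorization 2) := by
  set v := n.factorization 2 with hv
  have hn0 : n ≠ 0 := hn.ne'
  have p2 : Nat.Prime 2 := Nat.prime_two
  have hdvd_iff : ∀ k, 2 ^ k ∣ n ↔ k ≤ v := fun k =>
    p2.pow_dvd_iff_le_factorization hn0
  set S : ℕ → ℕ := fun k => ∑ i ∈ Finset.range k, 2 ^ (a i) with hS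
  have key : ∀ k, k ≤ r →
      (∃ j ≤ k, S j = 2 ^ v) ∨ (S k < 2 ^ v ∧ (k < r → 2 ^ (a k) ∣ S k)) := by
    intro k
    induction k with
    | zero =>
      intro _
      right
      constructor
      · simp [hS]
      · intro _; simp [hS]
    | succ k ih =>
      intro hk1
      have hkr : k < r := hk1
      rcases ih hkr.le with ⟨j, hj, hje⟩ | ⟨h1, h2⟩
      · exact Or.inl ⟨j, hj.trans k.le_succ, hje⟩
      have hdvdk : 2 ^ (a k) ∣ S k := h2 hkr
      have hak : a k ≤ v := by
        rcases Nat.eq_zero_or_pos (S k) with h0 | hpos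
        · -- S k = 0 forces k = 0
          have hk0 : k = 0 := by
            by_contra hne
            have h0k : 0 < k := Nat.pos_of_ne_zero hne
            have : 2 ^ (a 0) ≤ S k := by
              apply Finset.single_le_sum (f := fun i => 2 ^ (a i))
              · intro i _; positivity
              · exact Finset.mem_range.2 h0k
            have : 0 < 2 ^ (a 0) := by positivity
            omega
          subst hk0
          have hdn : 2 ^ (a 0) ∣ n := by
            rw [← hsum]
            apply Finset.dvd_sum
            intro i hi
            exact pow_dvd_pow 2 (hmono 0 i (Nat.zero_le i) (Finset.mem_range.1 hi))
          exact (hdvd_iff _).1 hdn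
        · have hle : 2 ^ (a k) ≤ S k := Nat.le_of_dvd hpos hdvdk
          have : 2 ^ (a k) < 2 ^ v := lt_of_le_of_lt hle h1
          by_contra hc
          have : 2 ^ v ≤ 2 ^ (a k) := Nat.pow_le_pow_right (by norm_num) (by omega)
          omega
      have hSsucc : S (k + 1) = S k + 2 ^ (a k) := Finset.sum_range_succ _ _
      have hle : S (k + 1) ≤ 2 ^ v := by
        have hd : 2 ^ (a k) ∣ 2 ^ v - S k :=
          Nat.dvd_sub (pow_dvd_pow 2 hak) hdvdk
        have hpos : 0 < 2 ^ v - S k := by omega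
        have := Nat.le_of_dvd hpos hd
        omega
      rcases eq_or_lt_of_le hle with heq | hlt
      · exact Or.inl ⟨k + 1, le_rfl, heq⟩
      right
      refine ⟨hlt, ?_⟩
      intro hk1r
      by_contra hnd
      set m := S (k + 1) with hm
      have hm0 : 0 < m := by
        have : 0 < 2 ^ (a k) := by positivity
        omega
      set d := m.factorization 2 with hd
      have hmd_iff : ∀ t, 2 ^ t ∣ m ↔ t ≤ d := fun t =>
        p2.pow_dvd_iff_le_factorization hm0.ne'
      have hdm : 2 ^ d ∣ m := Nat.ordProj_dvd m 2
      have hda : d < a (k + 1) := by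
        by_contra hc
        exact hnd ((hmd_iff _).2 (by omega))
      set T := ∑ i ∈ Finset.Ico (k + 1) r, 2 ^ (a i) with hT
      have hTd : 2 ^ (d + 1) ∣ T := by
        apply Finset.dvd_sum
        intro i hi
        have hi1 := (Finset.mem_Ico.1 hi)
        have : a (k + 1) ≤ a i := hmono (k + 1) i hi1.1 hi1.2
        exact pow_dvd_pow 2 (by omega)
      have hsplit : m + T = n := by
        rw [hm, hT, hS, ← hsum]
        exact Finset.sum_range_add_sum_Ico _ hk1r.le
      have hnd1 : ¬ 2 ^ (d + 1) ∣ n := by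
        intro h
        have hdm1 : 2 ^ (d + 1) ∣ m := by
          have := Nat.dvd_sub h hTd
          have hmn : n - T = m := by omega
          rwa [hmn] at this
        have := (hmd_iff _).1 hdm1
        omega
      have hdn : 2 ^ d ∣ n := by
        rw [← hsplit]
        exact dvd_add hdm (dvd_trans (pow_dvd_pow 2 (Nat.le_succ d)) hTd)
      have hvd : v = d := by
        have h1' : d ≤ v := (hdvd_iff _).1 hdn
        have h2' : ¬ (d + 1 ≤ v) := fun h => hnd1 ((hdvd_iff _).2 h)
        omega
      have : 2 ^ v ≤ m := Nat.le_of_dvd hm0 (by rw [hvd]; exact hdm)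
      omega
  rcases key r le_rfl with ⟨j, hj, hje⟩ | ⟨h1, _⟩
  · exact ⟨Finset.range j, Finset.range_subset_range.2 hj, hje⟩
  · have : S r = n := hsum
    have : 2 ^ v ≤ n := Nat.le_of_dvd hn ((hdvd_iff v).2 le_rfl)
    omega
end

section
/- Let a₁, ..., a_r, a be integers with 0 ≤ a₁ ≤ ... ≤ a_r, r ≥ 2 and a ≥ 1, and suppose ∑_{i=1}^r 2^{a_i} = 3·2^a. Then one of the following holds: (i) r = 2, a₁ = a, a₂ = a+1; (ii) r = 3 and a₁ = a₂ = a₃ = a; (iii) there exist two disjoint subsets J₁, J₂ ⊆ {1,...,r} with ∑_{i∈J₁} 2^{a_i} = ∑_{i∈J₂} 2^{a_i} = 2^{a-1}. -/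
lemma key_prefix (n m : ℕ) (b : ℕ → ℕ)
    (hmono : ∀ i j, i ≤ j → j < n → b i ≤ b j)
    (hb0 : b 0 ≤ m)
    (hdvd : 2 ^ m ∣ ∑ i ∈ Finset.range n, 2 ^ (b i))
    (hle : 2 ^ m ≤ ∑ i ∈ Finset.range n, 2 ^ (b i)) :
    ∃ k, k ≤ n ∧ ∑ i ∈ Finset.range k, 2 ^ (b i) = 2 ^ m := by
  classical
  have hex : ∃ k, 2 ^ m ≤ ∑ i ∈ Finset.range k, 2 ^ (b i) := ⟨n, hle⟩
  set j := Nat.find hex with hjdef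
  have hj : 2 ^ m ≤ ∑ i ∈ Finset.range j, 2 ^ (b i) := Nat.find_spec hex
  have hjn : j ≤ n := Nat.find_min' hex hle
  have hmpos : 0 < 2 ^ m := pow_pos (by norm_num) m
  have hj1 : 1 ≤ j := by
    by_contra h
    have hj0 : j = 0 := by omega
    rw [hj0] at hj
    simp at hj
  have hj1n : j - 1 < n := by omega
  have hlt : ∑ i ∈ Finset.range (j - 1), 2 ^ (b i) < 2 ^ m := by
    have := Nat.find_min hex (show j - 1 < j by omega)
    omega
  have hsplit : ∑ i ∈ Finset.range n, 2 ^ (b i)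
      = ∑ i ∈ Finset.range (j - 1), 2 ^ (b i) + ∑ i ∈ Finset.Ico (j - 1) n, 2 ^ (b i) := by
    rw [Finset.range_eq_Ico, ← Finset.sum_Ico_consecutive _ (Nat.zero_le (j - 1)) (by omega : j - 1 ≤ n), ← Finset.range_eq_Ico]
  have hsufdvd : 2 ^ (b (j - 1)) ∣ ∑ i ∈ Finset.Ico (j - 1) n, 2 ^ (b i) :=
    Finset.dvd_sum fun i hi =>
      pow_dvd_pow 2 (hmono (j - 1) i (Finset.mem_Ico.mp hi).1 (Finset.mem_Ico.mp hi).2)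
  by_cases hc : b (j - 1) ≤ m
  · -- prefix is a multiple of 2^(b (j-1)), so hitting exactly 2^m
    have hSdvd : 2 ^ (b (j - 1)) ∣ ∑ i ∈ Finset.range n, 2 ^ (b i) :=
      dvd_trans (pow_dvd_pow 2 hc) hdvd
    rw [hsplit] at hSdvd
    have hPdvd : 2 ^ (b (j - 1)) ∣ ∑ i ∈ Finset.range (j - 1), 2 ^ (b i) :=
      (Nat.dvd_add_right hsufdvd).mp (by rwa [Nat.add_comm] at hSdvd)
    obtain ⟨q, hq⟩ := hPdvd
    have hpow : 2 ^ (b (j - 1)) * 2 ^ (m - b (j - 1)) = 2 ^ m := by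
      rw [← pow_add]; congr 1; omega
    have hqlt : q < 2 ^ (m - b (j - 1)) := by
      have h1 : 2 ^ (b (j - 1)) * q < 2 ^ (b (j - 1)) * 2 ^ (m - b (j - 1)) := by
        rw [hpow, ← hq]; exact hlt
      exact Nat.lt_of_mul_lt_mul_left h1
    have hle2 : ∑ i ∈ Finset.range (j - 1), 2 ^ (b i) + 2 ^ (b (j - 1)) ≤ 2 ^ m := by
      rw [hq, ← hpow]
      calc 2 ^ (b (j - 1)) * q + 2 ^ (b (j - 1)) = 2 ^ (b (j - 1)) * (q + 1) := by ring
        _ ≤ 2 ^ (b (j - 1)) * 2 ^ (m - b (j - 1)) :=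
            Nat.mul_le_mul_left _ (by omega)
    have hjeq : j - 1 + 1 = j := by omega
    have hPj : ∑ i ∈ Finset.range j, 2 ^ (b i)
        = ∑ i ∈ Finset.range (j - 1), 2 ^ (b i) + 2 ^ (b (j - 1)) := by
      have h := Finset.sum_range_succ (fun i => 2 ^ (b i)) (j - 1)
      rw [hjeq] at h
      exact h
    refine ⟨j, hjn, le_antisymm ?_ hj⟩
    rw [hPj]; exact hle2
  · -- b (j-1) > m : contradiction
    exfalso
    push_neg at hc
    have hj2 : 2 ≤ j := by
      rcases Nat.lt_or_ge j 2 with h | h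
      · have : j = 1 := by omega
        rw [this] at hc; simp at hc; omega
      · exact h
    have hpos : 1 ≤ ∑ i ∈ Finset.range (j - 1), 2 ^ (b i) := by
      have h0 : (0 : ℕ) ∈ Finset.range (j - 1) := Finset.mem_range.mpr (by omega)
      have h2 : 2 ^ (b 0) ≤ ∑ i ∈ Finset.range (j - 1), 2 ^ (b i) :=
        Finset.single_le_sum (f := fun i => 2 ^ (b i)) (fun i _ => Nat.zero_le _) h0
      have h1 : 1 ≤ 2 ^ (b 0) := Nat.one_le_two_pow
      omega
    have hsufdvd' : 2 ^ m ∣ ∑ i ∈ Finset.Ico (j - 1) n, 2 ^ (b i) :=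
      dvd_trans (pow_dvd_pow 2 (by omega : m ≤ b (j - 1))) hsufdvd
    have hSdvd := hdvd
    rw [hsplit] at hSdvd
    have hPdvd : 2 ^ m ∣ ∑ i ∈ Finset.range (j - 1), 2 ^ (b i) :=
      (Nat.dvd_add_right hsufdvd').mp (by rwa [Nat.add_comm] at hSdvd)
    have := Nat.eq_zero_of_dvd_of_lt hPdvd hlt
    omega

theorem stmt_13 (r A : ℕ) (hr : 2 ≤ r) (hA : 1 ≤ A) (a : ℕ → ℕ)
    (hmono : ∀ i j, i ≤ j → j < r → a i ≤ a j)
    (hsum : ∑ i ∈ Finset.range r, 2 ^ (a i) = 3 * 2 ^ A) :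
    (r = 2 ∧ a 0 = A ∧ a 1 = A + 1) ∨
    (r = 3 ∧ a 0 = A ∧ a 1 = A ∧ a 2 = A) ∨
    (∃ J₁ J₂ : Finset ℕ, J₁ ⊆ Finset.range r ∧ J₂ ⊆ Finset.range r ∧ Disjoint J₁ J₂ ∧
      ∑ i ∈ J₁, 2 ^ (a i) = 2 ^ (A - 1) ∧ ∑ i ∈ J₂, 2 ^ (a i) = 2 ^ (A - 1)) := by
  have hm : A - 1 + 1 = A := by omega
  have hYdef : 2 ^ A = 2 * 2 ^ (A - 1) := by
    conv_lhs => rw [← hm]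
    rw [pow_succ]; ring
  have hY : 0 < 2 ^ (A - 1) := pow_pos (by norm_num) _
  by_cases ha0 : a 0 ≤ A - 1
  · -- the main case: construct two disjoint subsets
    right; right
    obtain ⟨k, hk, hksum⟩ := key_prefix r (A - 1) a hmono ha0
      (by rw [hsum, hYdef]; exact ⟨6, by ring⟩)
      (by rw [hsum, hYdef]; nlinarith)
    have hsplit : ∑ i ∈ Finset.range r, 2 ^ (a i)
        = ∑ i ∈ Finset.range k, 2 ^ (a i) + ∑ i ∈ Finset.Ico k r, 2 ^ (a i) := by
      rw [Finset.range_eq_Ico, ← Finset.sum_Ico_consecutive _ (Nat.zero_le k) hk, ← Finset.range_eq_Ico]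
    have hIco : ∑ i ∈ Finset.Ico k r, 2 ^ (a i) = 5 * 2 ^ (A - 1) := by
      rw [hsplit, hksum] at hsum
      omega
    have hkr : k < r := by
      by_contra h
      have hkr' : k = r := by omega
      rw [hkr', Finset.Ico_self] at hIco
      simp at hIco
    have hak : a k ≤ A - 1 := by
      by_contra h
      push_neg at h
      have hdvdT : 2 ^ A ∣ ∑ i ∈ Finset.Ico k r, 2 ^ (a i) :=
        Finset.dvd_sum fun i hi => pow_dvd_pow 2 (by
          have := hmono k i (Finset.mem_Ico.mp hi).1 (Finset.mem_Ico.mp hi).2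
          omega)
      rw [hIco, hYdef] at hdvdT
      have h25 : (2 : ℕ) ∣ 5 := by
        have := (Nat.mul_dvd_mul_iff_right hY).mp hdvdT
        exact this
      omega
    have hIco' : ∑ i ∈ Finset.range (r - k), 2 ^ (a (k + i)) = 5 * 2 ^ (A - 1) := by
      rw [Finset.sum_Ico_eq_sum_range] at hIco
      exact hIco
    obtain ⟨k', hk', hk'sum⟩ := key_prefix (r - k) (A - 1) (fun i => a (k + i))
      (fun i j hij hjn => hmono (k + i) (k + j) (by omega) (by omega))
      (by simpa using hak)
      (by rw [hIco']; exact ⟨5, by ring⟩)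
      (by rw [hIco']; omega)
    refine ⟨Finset.range k, Finset.Ico k (k + k'), ?_, ?_, ?_, hksum, ?_⟩
    · exact Finset.range_subset_range.mpr hk
    · intro x hx
      rw [Finset.mem_Ico] at hx
      rw [Finset.mem_range]
      omega
    · rw [Finset.disjoint_left]
      intro x hx hx'
      rw [Finset.mem_range] at hx
      rw [Finset.mem_Ico] at hx'
      omega
    · rw [Finset.sum_Ico_eq_sum_range]
      have : k + k' - k = k' := by omega
      rw [this]
      exact hk'sum
  · -- a 0 ≥ A : small cases
    push_neg at ha0
    have haA : ∀ i, i < r → A ≤ a i := by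
      intro i hi
      have := hmono 0 i (Nat.zero_le i) hi
      omega
    have haub : ∀ i, i < r → a i ≤ A + 1 := by
      intro i hi
      by_contra h
      push_neg at h
      have h1 : 2 ^ (a i) ≤ ∑ j ∈ Finset.range r, 2 ^ (a j) :=
        Finset.single_le_sum (f := fun j => 2 ^ (a j)) (fun j _ => Nat.zero_le _)
          (Finset.mem_range.mpr hi)
      have h2 : 2 ^ (A + 2) ≤ 2 ^ (a i) := Nat.pow_le_pow_right (by norm_num) (by omega)
      rw [hsum] at h1
      have h3 : 2 ^ (A + 2) = 4 * 2 ^ A := by rw [pow_add]; ring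
      have hApos : 0 < 2 ^ A := pow_pos (by norm_num) _
      omega
    have hrle : r ≤ 3 := by
      by_contra h
      push_neg at h
      have h1 : ∑ i ∈ Finset.range r, 2 ^ A ≤ ∑ i ∈ Finset.range r, 2 ^ (a i) :=
        Finset.sum_le_sum fun i hi =>
          Nat.pow_le_pow_right (by norm_num) (haA i (Finset.mem_range.mp hi))
      rw [Finset.sum_const, Finset.card_range, smul_eq_mul, hsum] at h1
      have hApos : 0 < 2 ^ A := pow_pos (by norm_num) _
      nlinarith
    have hApos : 0 < 2 ^ A := pow_pos (by norm_num) _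
    have hpow1 : 2 ^ (A + 1) = 2 * 2 ^ A := by rw [pow_succ]; ring
    interval_cases r
    · -- r = 2
      left
      have h0 : a 0 = A ∨ a 0 = A + 1 := by
        have := haA 0 (by norm_num); have := haub 0 (by norm_num); omega
      have h1 : a 1 = A ∨ a 1 = A + 1 := by
        have := haA 1 (by norm_num); have := haub 1 (by norm_num); omega
      have hs : 2 ^ (a 0) + 2 ^ (a 1) = 3 * 2 ^ A := by
        rw [← hsum, Finset.sum_range_succ, Finset.sum_range_one]
      have hm01 : a 0 ≤ a 1 := hmono 0 1 (by norm_num) (by norm_num)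
      rcases h0 with h0 | h0 <;> rcases h1 with h1 | h1 <;>
        rw [h0, h1] at hs <;> (try simp only [hpow1] at hs) <;>
        first | (exact ⟨rfl, h0, h1⟩) | omega
    · -- r = 3
      right; left
      have h0 : a 0 = A ∨ a 0 = A + 1 := by
        have := haA 0 (by norm_num); have := haub 0 (by norm_num); omega
      have h1 : a 1 = A ∨ a 1 = A + 1 := by
        have := haA 1 (by norm_num); have := haub 1 (by norm_num); omega
      have h2 : a 2 = A ∨ a 2 = A + 1 := by
        have := haA 2 (by norm_num); have := haub 2 (by norm_num); omega
      have hs : 2 ^ (a 0) + 2 ^ (a 1) + 2 ^ (a 2) = 3 * 2 ^ A := by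
        rw [← hsum, Finset.sum_range_succ, Finset.sum_range_succ, Finset.sum_range_one]
      have hm01 : a 0 ≤ a 1 := hmono 0 1 (by norm_num) (by norm_num)
      have hm12 : a 1 ≤ a 2 := hmono 1 2 (by norm_num) (by norm_num)
      rcases h0 with h0 | h0 <;> rcases h1 with h1 | h1 <;> rcases h2 with h2 | h2 <;>
        rw [h0, h1, h2] at hs <;> (try simp only [hpow1] at hs) <;>
        first | (exact ⟨rfl, h0, h1, h2⟩) | omega
end

section
/- Let a₁,...,a_r, a be integers with 0 ≤ a₁ ≤ ... ≤ a_r, r ≥ 2, a ≥ 1, and ∑_{i=1}^r 2^{a_i} = 3·2^a. If the a_i are not (a, a+1) for r=2 and not (a,a,a) for r=3, then there exists a subset J ⊆ {1,...,r} with ∑_{i∈J} 2^{a_i} = 2^a. -/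
/-! If every exponent is at most `A`, then every power divides `2 ^ A`, and the greedy choice
(largest powers first) hits `2 ^ A` exactly, because the remaining target stays divisible by all
smaller powers. Otherwise some exponent exceeds `A`; it must equal `A + 1`, since `2 ^ (A + 2)`
already exceeds the total, and the remaining terms then sum to `2 ^ A`. -/

open Finset

theorem Finset.exists_subset_sum_pow_eq_of_pow_dvd {ι : Type*} (b : ℕ) (f : ι → ℕ)
    (s : Finset ι) (T : ℕ) (hdvd : ∀ i ∈ s, b ^ f i ∣ T) (hle : T ≤ ∑ i ∈ s, b ^ f i) :
    ∃ J ⊆ s, ∑ i ∈ J, b ^ f i = T := by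
  classical
  induction s using Finset.induction_on_max_value f generalizing T with
  | empty => exact ⟨∅, empty_subset _, by simp_all⟩
  | insert m s hm hmax ih =>
    rcases Nat.eq_zero_or_pos T with rfl | hT
    · exact ⟨∅, empty_subset _, sum_empty⟩
    have hmT : b ^ f m ≤ T := Nat.le_of_dvd hT (hdvd m (mem_insert_self m s))
    obtain ⟨J, hJs, hJ⟩ := ih (T - b ^ f m)
      (fun i hi => Nat.dvd_sub (hdvd i (mem_insert_of_mem hi))
        (pow_dvd_pow b (hmax i hi)))
      (by rw [sum_insert hm] at hle; omega)
    refine ⟨insert m J, insert_subset_insert m hJs, ?_⟩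
    rw [sum_insert (fun h => hm (hJs h)), hJ]
    omega

theorem stmt_14_general (r A : ℕ) (a : ℕ → ℕ)
    (hsum : ∑ i ∈ Finset.range r, 2 ^ (a i) = 3 * 2 ^ A) :
    ∃ J ⊆ Finset.range r, ∑ i ∈ J, 2 ^ (a i) = 2 ^ A := by
  have hpos : 0 < 2 ^ A := Nat.two_pow_pos A
  by_cases hsmall : ∀ i ∈ range r, a i ≤ A
  · exact exists_subset_sum_pow_eq_of_pow_dvd 2 a (range r) (2 ^ A)
      (fun i hi => pow_dvd_pow 2 (hsmall i hi)) (by omega)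
  push Not at hsmall
  obtain ⟨i, hi, hAi⟩ := hsmall
  have hai : a i = A + 1 := by
    have hle : 2 ^ a i ≤ 3 * 2 ^ A := 
      hsum ▸ single_le_sum (f := fun j => 2 ^ a j) (fun _ _ => Nat.zero_le _) hi
    by_contra hne
    have : 2 ^ (A + 2) ≤ 2 ^ a i := Nat.pow_le_pow_right two_pos (by omega)
    rw [pow_add] at this
    omega
  refine ⟨(range r).erase i, erase_subset i _, ?_⟩
  have hsplit := sum_erase_add (range r) (fun j => 2 ^ a j) hi
  rw [hsum, hai, pow_succ] at hsplit
  omega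

theorem stmt_14 (r A : ℕ) (hr : 2 ≤ r) (hA : 1 ≤ A) (a : ℕ → ℕ)
    (hmono : ∀ i j, i ≤ j → j < r → a i ≤ a j)
    (hsum : ∑ i ∈ Finset.range r, 2 ^ (a i) = 3 * 2 ^ A)
    (hnot₁ : ¬ (r = 2 ∧ a 0 = A ∧ a 1 = A + 1))
    (hnot₂ : ¬ (r = 3 ∧ a 0 = A ∧ a 1 = A ∧ a 2 = A)) :
    ∃ J ⊆ Finset.range r, ∑ i ∈ J, 2 ^ (a i) = 2 ^ A :=
  stmt_14_general r A a hsum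
end

section
/- Let G be a finite group and N a normal subgroup of G contained in the Frattini subgroup Φ(G). Then σ₀(G) = σ₀(G/N), where σ₀ is the primary covering number. -/
/-- A primary covering of `G`: a finite family of proper subgroups whose union
contains every element of prime power order. -/
def IsPrimaryCovering {G : Type*} [Group G] (𝒜 : Finset (Subgroup G)) : Prop :=
  (∀ H ∈ 𝒜, H ≠ ⊤) ∧ ∀ g : G, IsPrimePow (orderOf g) → ∃ H ∈ 𝒜, g ∈ H

/-- The primary covering number `σ₀(G)`, with value `⊤` if no primary covering exists. -/
noncomputable def primaryCoveringNumber (G : Type*) [Group G] : ℕ∞ :=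
  sInf {n : ℕ∞ | ∃ 𝒜 : Finset (Subgroup G), IsPrimaryCovering 𝒜 ∧ (𝒜.card : ℕ∞) = n}

lemma primaryCoveringNumber_le {G : Type*} [Group G] {𝒜 : Finset (Subgroup G)}
    (h : IsPrimaryCovering 𝒜) : primaryCoveringNumber G ≤ 𝒜.card :=
  sInf_le ⟨𝒜, h, rfl⟩

theorem stmt_16 (G : Type*) [Group G] [Finite G] (N : Subgroup G) [N.Normal]
    (hN : N ≤ frattini G) :
    primaryCoveringNumber G = primaryCoveringNumber (G ⧸ N) := by
  classical
  have π := QuotientGroup.mk' N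
  set π : G →* G ⧸ N := QuotientGroup.mk' N with hπ
  have hsurj : Function.Surjective π := QuotientGroup.mk'_surjective N
  apply le_antisymm
  · -- pull back a covering of G ⧸ N
    apply le_sInf
    rintro n ⟨𝒜, ⟨hprop, hcov⟩, rfl⟩
    set ℬ : Finset (Subgroup G) := 𝒜.image (Subgroup.comap π) with hℬ
    have hB : IsPrimaryCovering ℬ := by
      constructor
      · intro H hH
        simp only [hℬ, Finset.mem_image] at hH
        obtain ⟨K, hK, rfl⟩ := hH
        intro htop
        exact hprop K hK (by
          have := congrArg (Subgroup.map π) htop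
          rwa [Subgroup.map_comap_eq_self_of_surjective hsurj,
            Subgroup.map_top_of_surjective π hsurj] at this)
      · intro g hg
        by_cases hg1 : π g = 1
        · -- g ∈ N; find any member of 𝒜
          have hGNnontriv : ∃ x : G ⧸ N, x ≠ 1 := by
            by_contra hno
            push_neg at hno
            -- then N = ⊤, so frattini G = ⊤, so G is trivial
            have hNtop : N = ⊤ := by
              rw [eq_top_iff]
              intro x _
              have : π x = 1 := hno _
              exact (QuotientGroup.eq_one_iff x).mp this
            have hfr : frattini G = ⊤ := le_antisymm le_top (hNtop ▸ hN)
            rcases eq_top_or_exists_le_coatom (⊥ : Subgroup G) with hbt | ⟨K, hK, _⟩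
            · -- G trivial, contradicting g of prime power order
              have : g = 1 := by
                have : g ∈ (⊥ : Subgroup G) := hbt ▸ Subgroup.mem_top g
                simpa using this
              rw [this, orderOf_one] at hg
              exact not_isPrimePow_one hg
            · exact hK.1 (le_antisymm le_top (hfr ▸ frattini_le_coatom hK))
          obtain ⟨x, hx⟩ := hGNnontriv
          -- produce an element of prime order in G ⧸ N
          have hxord : orderOf x ≠ 1 := by simpa using hx
          obtain ⟨p, hp, hpd⟩ := Nat.exists_prime_and_dvd hxord
          have hx0 : orderOf x ≠ 0 := by
            have : IsOfFinOrder x := isOfFinOrder_of_finite x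
            exact this.orderOf_pos.ne'
          have hyord : orderOf (x ^ (orderOf x / p)) = p := by
            rw [orderOf_pow]
            have hd : orderOf x / p ∣ orderOf x := Nat.div_dvd_of_dvd hpd
            rw [Nat.gcd_eq_right hd, Nat.div_div_self hpd hx0]
          obtain ⟨H, hH, _⟩ := hcov (x ^ (orderOf x / p)) (by
            rw [hyord]; exact hp.isPrimePow)
          refine ⟨Subgroup.comap π H, Finset.mem_image_of_mem _ hH, ?_⟩
          rw [Subgroup.mem_comap, hg1]
          exact H.one_mem
        · have hdvd : orderOf (π g) ∣ orderOf g := orderOf_map_dvd π g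
          obtain ⟨p, k, hp, hk, hpk⟩ := hg
          obtain ⟨j, hj, hje⟩ := (Nat.dvd_prime_pow hp.nat_prime).mp (hpk ▸ hdvd)
          have hj0 : j ≠ 0 := by
            intro h0
            rw [h0, pow_zero] at hje
            exact hg1 (orderOf_eq_one_iff.mp hje)
          obtain ⟨H, hH, hgH⟩ := hcov (π g)
            ⟨p, j, hp, Nat.pos_of_ne_zero hj0, hje.symm⟩
          exact ⟨Subgroup.comap π H, Finset.mem_image_of_mem _ hH, hgH⟩
    calc primaryCoveringNumber G ≤ (ℬ.card : ℕ∞) := primaryCoveringNumber_le hB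
      _ ≤ (𝒜.card : ℕ∞) := by exact_mod_cast Finset.card_image_le
  · -- push forward a covering of G
    apply le_sInf
    rintro n ⟨𝒜, ⟨hprop, hcov⟩, rfl⟩
    set ℬ : Finset (Subgroup (G ⧸ N)) := 𝒜.image (Subgroup.map π) with hℬ
    have hB : IsPrimaryCovering ℬ := by
      constructor
      · intro H hH
        simp only [hℬ, Finset.mem_image] at hH
        obtain ⟨K, hK, rfl⟩ := hH
        intro htop
        apply hprop K hK
        have hsup : K ⊔ N = ⊤ := by
          have := congrArg (Subgroup.comap π) htop
          rwa [Subgroup.comap_map_eq, hπ, QuotientGroup.ker_mk',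
            Subgroup.comap_top] at this
        apply frattini_nongenerating
        rw [eq_top_iff, ← hsup]
        exact sup_le_sup_left hN K
      · intro g' hg'
        obtain ⟨g, rfl⟩ := hsurj g'
        obtain ⟨p, k, hp, hk, hpk⟩ := hg'
        have hn0 : orderOf g ≠ 0 := (isOfFinOrder_of_finite g).orderOf_pos.ne'
        set n := orderOf g with hn
        set a := n / p ^ n.factorization p with ha
        have hdvd : orderOf (π g) ∣ n := orderOf_map_dvd π g
        have hpk_dvd : p ^ k ∣ n := hpk ▸ hdvd
        have hfk : k ≤ n.factorization p := by
          rw [← Nat.Prime.pow_dvd_iff_le_factorization hp.nat_prime hn0]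
          exact hpk_dvd
        have hord_a : orderOf (g ^ a) = p ^ n.factorization p := by
          rw [orderOf_pow, ← hn, Nat.gcd_eq_right (Nat.ordCompl_dvd n p),
            Nat.div_div_self (Nat.ordProj_dvd n p) hn0]
        have hppa : IsPrimePow (orderOf (g ^ a)) := by
          rw [hord_a]
          exact ⟨p, n.factorization p, hp, lt_of_lt_of_le hk hfk, rfl⟩
        obtain ⟨H, hH, hgaH⟩ := hcov (g ^ a) hppa
        -- π g is a power of π (g ^ a)
        have hcop : a.Coprime (orderOf (π g)) := by
          have hpa : ¬ p ∣ a := Nat.not_dvd_ordCompl hp.nat_prime hn0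
          rw [← hpk]
          exact Nat.Coprime.pow_right k
            ((hp.nat_prime.coprime_iff_not_dvd.mpr hpa).symm)
        obtain ⟨m, hm⟩ := exists_pow_eq_self_of_coprime hcop
        refine ⟨Subgroup.map π H, Finset.mem_image_of_mem _ hH, ?_⟩
        refine ⟨(g ^ a) ^ m, H.pow_mem hgaH m, ?_⟩
        rw [← hm]
        simp [map_pow]
    calc primaryCoveringNumber (G ⧸ N) ≤ (ℬ.card : ℕ∞) := primaryCoveringNumber_le hB
      _ ≤ (𝒜.card : ℕ∞) := by exact_mod_cast Finset.card_image_le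
end

section
/- Let G be a finite group whose abelianization G/G' is not a p-group for any prime p (i.e. |G/G'| has at least two prime divisors). Then σ₀(G) = 2: there exist two proper subgroups of G whose union contains every element of G of prime power order, and one proper subgroup never suffices. -/
open Finset

theorem Subgroup.eq_top_of_forall_isPrimePow_orderOf_mem {G : Type*} [Group G] [Finite G]
    {H : Subgroup G} (hH : ∀ g : G, IsPrimePow (orderOf g) → g ∈ H) : H = ⊤ := by
  refine H.eq_top_of_card_eq (Nat.dvd_antisymm H.card_subgroup_dvd_card ?_)
  refine (Nat.dvd_iff_prime_pow_dvd_dvd _ _).mpr fun p k hp hpk => ?_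
  have := Fact.mk hp
  obtain ⟨K, hK⟩ := Sylow.exists_subgroup_card_pow_prime p hpk
  have hKH : K ≤ H := by
    intro g hg
    obtain ⟨n, hn⟩ := IsPGroup.iff_orderOf.mp (IsPGroup.of_card hK) ⟨g, hg⟩
    rw [Subgroup.orderOf_mk] at hn
    rcases n.eq_zero_or_pos with rfl | hn0
    · have : g = 1 := orderOf_eq_one_iff.mp (by simpa using hn)
      exact this ▸ H.one_mem
    · exact hH g ⟨p, n, hp.prime, hn0, hn.symm⟩
  exact hK ▸ Subgroup.card_dvd_of_le hKH

theorem IsPrimaryCovering.two_le_card {G : Type*} [Group G] [Finite G] [Nontrivial G]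
    {𝒜 : Finset (Subgroup G)} (h𝒜 : IsPrimaryCovering 𝒜) : 2 ≤ 𝒜.card := by
  obtain ⟨p, hp, hpG⟩ := Nat.exists_prime_and_dvd (Finite.one_lt_card (α := G)).ne'
  have := Fact.mk hp
  obtain ⟨g, hg⟩ := exists_prime_orderOf_dvd_card' p hpG
  obtain ⟨H, hH𝒜, -⟩ := h𝒜.2 g (hg ▸ hp.isPrimePow)
  by_contra! hcard
  refine h𝒜.1 H hH𝒜 (Subgroup.eq_top_of_forall_isPrimePow_orderOf_mem fun x hx => ?_)
  obtain ⟨K, hK𝒜, hxK⟩ := h𝒜.2 x hx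
  rwa [Finset.card_le_one.mp (Nat.le_of_lt_succ hcard) K hK𝒜 H hH𝒜] at hxK

def coprimeOrderSubgroup (A : Type*) [CommGroup A] (p : ℕ) : Subgroup A where
  carrier := {a | (orderOf a).Coprime p}
  one_mem' := by simp
  mul_mem' {a b} ha hb := Nat.Coprime.coprime_dvd_left
    ((Commute.all a b).orderOf_mul_dvd_lcm.trans (Nat.lcm_dvd_mul _ _)) (ha.mul_left hb)
  inv_mem' := by simp

theorem mem_coprimeOrderSubgroup {A : Type*} [CommGroup A] {p : ℕ} {a : A} :
    a ∈ coprimeOrderSubgroup A p ↔ (orderOf a).Coprime p := Iff.rfl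

theorem mem_coprimeOrderSubgroup_iff_not_dvd {A : Type*} [CommGroup A] {p : ℕ} (hp : p.Prime)
    {a : A} : a ∈ coprimeOrderSubgroup A p ↔ ¬ p ∣ orderOf a := by
  rw [mem_coprimeOrderSubgroup, Nat.coprime_comm, hp.coprime_iff_not_dvd]

theorem mem_coprimeOrderSubgroup_of_orderOf_dvd_prime_pow {A : Type*} [CommGroup A] {p r k : ℕ}
    (hp : p.Prime) (hr : r.Prime) (hrp : r ≠ p) {a : A} (ha : orderOf a ∣ r ^ k) :
    a ∈ coprimeOrderSubgroup A p :=
  Nat.Coprime.coprime_dvd_left ha (Nat.Coprime.pow_left _ ((Nat.coprime_primes hr hp).mpr hrp))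

theorem exists_isPrimaryCovering_card_eq_two {G A : Type*} [Group G] [CommGroup A] [Finite A]
    {f : G →* A} (hf : Function.Surjective f) {p q : ℕ} (hp : p.Prime) (hq : q.Prime)
    (hpq : p ≠ q) (hpA : p ∣ Nat.card A) (hqA : q ∣ Nat.card A) :
    ∃ 𝒜 : Finset (Subgroup G), IsPrimaryCovering 𝒜 ∧ 𝒜.card = 2 := by
  classical
  have hnotMem : ∀ {r : ℕ}, r.Prime → r ∣ Nat.card A →
      ∃ g : G, orderOf (f g) = r ∧ g ∉ (coprimeOrderSubgroup A r).comap f := by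
    intro r hr hrA
    have := Fact.mk hr
    obtain ⟨a, ha⟩ := exists_prime_orderOf_dvd_card' r hrA
    obtain ⟨g, rfl⟩ := hf a
    refine ⟨g, ha, ?_⟩
    rw [Subgroup.mem_comap, mem_coprimeOrderSubgroup_iff_not_dvd hr, ha, not_not]
  obtain ⟨gp, hgp, hgpK⟩ := hnotMem hp hpA
  obtain ⟨gq, -, hgqK⟩ := hnotMem hq hqA
  set Kp := (coprimeOrderSubgroup A p).comap f
  set Kq := (coprimeOrderSubgroup A q).comap f
  have hgpKq : gp ∈ Kq :=
    mem_coprimeOrderSubgroup_of_orderOf_dvd_prime_pow (k := 1) hq hp hpq (by rw [hgp, pow_one])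
  refine ⟨{Kp, Kq}, ⟨?_, ?_⟩, card_pair fun h => hgpK (h ▸ hgpKq)⟩
  · simp only [mem_insert, mem_singleton, forall_eq_or_imp, forall_eq]
    exact ⟨fun h => hgpK (h ▸ Subgroup.mem_top gp), fun h => hgqK (h ▸ Subgroup.mem_top gq)⟩
  · rintro g ⟨r, k, hr, -, hg⟩
    have hfg : orderOf (f g) ∣ r ^ k := hg ▸ orderOf_map_dvd f g
    by_cases hrp : r = p
    · exact ⟨Kq, by simp, mem_coprimeOrderSubgroup_of_orderOf_dvd_prime_pow hq hr.nat_prime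
        (hrp ▸ hpq) hfg⟩
    · exact ⟨Kp, by simp, mem_coprimeOrderSubgroup_of_orderOf_dvd_prime_pow hp hr.nat_prime
        hrp hfg⟩

theorem exists_ne_primes_dvd_card_of_forall_not_isPGroup {A : Type*} [Group A] [Finite A]
    (h : ∀ p : ℕ, p.Prime → ¬ IsPGroup p A) :
    ∃ p q : ℕ, p.Prime ∧ q.Prime ∧ p ≠ q ∧ p ∣ Nat.card A ∧ q ∣ Nat.card A := by
  have hA1 : Nat.card A ≠ 1 := fun h1 => h 2 Nat.prime_two (IsPGroup.of_card (n := 0) h1)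
  obtain ⟨p, hp, hpA⟩ := Nat.exists_prime_and_dvd hA1
  by_contra! hq
  refine h p hp (IsPGroup.of_card
    (Nat.eq_prime_pow_of_unique_prime_dvd Nat.card_pos.ne' fun hd hdA => ?_))
  by_contra hdp
  exact hq p _ hp hd (Ne.symm hdp) hpA hdA

theorem stmt_17 (G : Type*) [Group G] [Finite G]
    (h : ∀ p : ℕ, p.Prime → ¬ IsPGroup p (Abelianization G)) :
    primaryCoveringNumber G = 2 := by
  obtain ⟨p, q, hp, hq, hpq, hpA, hqA⟩ := exists_ne_primes_dvd_card_of_forall_not_isPGroup h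
  have hsurj : Function.Surjective (Abelianization.of : G →* Abelianization G) :=
    QuotientGroup.mk_surjective
  have : Nontrivial (Abelianization G) :=
    Finite.one_lt_card_iff_nontrivial.mp (hp.one_lt.trans_le (Nat.le_of_dvd Nat.card_pos hpA))
  have : Nontrivial G := hsurj.nontrivial
  obtain ⟨𝒜, h𝒜, hcard⟩ := exists_isPrimaryCovering_card_eq_two hsurj hp hq hpq hpA hqA
  refine le_antisymm (sInf_le ⟨𝒜, h𝒜, by rw [hcard]; rfl⟩) (le_sInf ?_)
  rintro _ ⟨ℬ, hℬ, rfl⟩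
  exact_mod_cast hℬ.two_le_card
end

section
/- Let G be a finite group, let σ₀ denote the primary covering number, and let M be a maximal subgroup of G with σ₀(M) > σ₀(G). Then M belongs to every primary covering of G of minimal size σ₀(G). -/
theorem stmt_18 (G : Type*) [Group G] [Finite G] (M : Subgroup G) (hM : IsCoatom M)
    (h : primaryCoveringNumber G < primaryCoveringNumber M) :
    ∀ 𝒜 : Finset (Subgroup G), IsPrimaryCovering 𝒜 →
      (𝒜.card : ℕ∞) = primaryCoveringNumber G → M ∈ 𝒜 := by
  intro 𝒜 h𝒜 hcard
  by_contra hMA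
  classical
  set ℬ : Finset (Subgroup M) := 𝒜.image (Subgroup.comap M.subtype) with hB
  have hBcov : IsPrimaryCovering ℬ := by
    constructor
    · intro K hK
      simp only [hB, Finset.mem_image] at hK
      obtain ⟨H, hH, rfl⟩ := hK
      intro htop
      have hle : M ≤ H := by
        intro m hm
        have : (⟨m, hm⟩ : M) ∈ Subgroup.comap M.subtype H := htop ▸ Subgroup.mem_top _
        exact this
      rcases lt_or_eq_of_le hle with hlt | heq
      · exact h𝒜.1 H hH (hM.2 H hlt)
      · exact hMA (heq ▸ hH)
    · intro m hm
      have hord : orderOf (m : G) = orderOf m :=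
        (orderOf_injective M.subtype M.subtype_injective m).symm ▸ rfl
      obtain ⟨H, hH, hmH⟩ := h𝒜.2 (m : G) (by rwa [hord])
      exact ⟨Subgroup.comap M.subtype H, by rw [hB]; exact Finset.mem_image_of_mem _ hH, hmH⟩
  have h1 : primaryCoveringNumber M ≤ (ℬ.card : ℕ∞) :=
    sInf_le ⟨ℬ, hBcov, rfl⟩
  have h2 : (ℬ.card : ℕ∞) ≤ (𝒜.card : ℕ∞) := by
    rw [hB]; exact_mod_cast Finset.card_image_le
  exact absurd (h1.trans (h2.trans_eq hcard)) (not_le.mpr h)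
end

section
/- Let G be a finite solvable group and N a complemented minimal normal subgroup of G. If N has more than one complement in G, then the number b of complements of N in G satisfies b ≥ |N|. -/
/-!
A minimal normal subgroup `N` of a solvable group is abelian, so for a complement `H` the
subgroup `N ⊓ normalizer H` is normal in `G = N * H`; by minimality it is `⊥` or `N`.
If it is `⊥`, the conjugates of `H` by elements of `N` are `|N|` distinct complements.
If it is `N`, then `H` is normal and `N` is central, hence of prime order `p`. Complements of `N`
are then exactly the kernels of retractions `G → N`, and a retraction is determined by its kernel.
Two distinct retractions `π₁, π₂` give a nontrivial `δ = π₁ / π₂` vanishing on `N`, of order `p`,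
and the retractions `δ ^ i * π₂`, `i < p`, have `p` distinct kernels.
-/

open Subgroup Pointwise

namespace Subgroup

variable {G : Type*} [Group G] {N H K : Subgroup G}

theorem IsComplement'.map_mulEquiv {G' : Type*} [Group G'] (h : H.IsComplement' K) (e : G ≃* G') :
    (H.map e.toMonoidHom).IsComplement' (K.map e.toMonoidHom) := by
  refine isComplement'_of_disjoint_and_mul_eq_univ ?_ ?_
  · rw [disjoint_iff, ← map_inf_eq _ _ _ e.injective, h.disjoint.eq_bot, map_bot]
  · rw [coe_map, coe_map, ← Set.image_mul, IsComplement.mul_eq h]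
    exact Set.image_univ_of_surjective e.surjective

theorem IsComplement'.smul {A : Type*} [Group A] [MulDistribMulAction A G]
    (h : H.IsComplement' K) (a : A) : (a • H).IsComplement' (a • K) :=
  h.map_mulEquiv (MulDistribMulAction.toMulAut A G a)

theorem IsComplement'.conjAct_smul [N.Normal] (h : N.IsComplement' H) (g : ConjAct G) :
    N.IsComplement' (g • H) := by
  simpa only [‹N.Normal›.conjAct g] using h.smul g

theorem card_le_card_isComplement'_of_inf_normalizer_eq_bot [Finite G] [N.Normal]
    (hH : N.IsComplement' H) (hP : N ⊓ normalizer H = ⊥) :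
    Nat.card N ≤ Nat.card {K : Subgroup G // N.IsComplement' K} := by
  refine Nat.card_le_card_of_injective
    (fun n ↦ ⟨ConjAct.toConjAct (n : G) • H, hH.conjAct_smul _⟩) fun n₁ n₂ h ↦ ?_
  have h' : ConjAct.toConjAct (n₁ : G) • H = ConjAct.toConjAct (n₂ : G) • H :=
    congrArg Subtype.val h
  have hfix : ConjAct.toConjAct ((n₂ : G)⁻¹ * n₁) • H = H := by
    rw [map_mul, map_inv, mul_smul, h', inv_smul_smul]
  have hmem : (n₂ : G)⁻¹ * n₁ ∈ N ⊓ normalizer H :=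
    ⟨N.mul_mem (N.inv_mem n₂.2) n₁.2, conjAct_pointwise_smul_iff.mp hfix⟩
  rw [hP, mem_bot, inv_mul_eq_one] at hmem
  exact Subtype.ext hmem.symm

theorem le_centralizer_self_of_minimal_normal [Group.IsSolvable G] [N.Normal] (hN : N ≠ ⊥)
    (hmin : ∀ K : Subgroup G, K.Normal → K ≤ N → K = ⊥ ∨ K = N) : N ≤ centralizer N := by
  rcases hmin ⁅N, N⁆ inferInstance (commutator_le_left N N) with h | h
  · exact commutator_eq_bot_iff_le_centralizer.mp h
  · exact absurd h (Group.IsSolvable.commutator_lt_of_ne_bot hN).ne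

theorem normal_of_isComplement'_of_le_normalizer (hH : N.IsComplement' H)
    (h : N ≤ normalizer H) : H.Normal :=
  normalizer_eq_top_iff.mp (eq_top_iff.mpr (hH.sup_eq_top ▸ sup_le h le_normalizer))

theorem normal_inf_normalizer_of_isComplement' [N.Normal] (hNab : N ≤ centralizer N)
    (hH : N.IsComplement' H) : (N ⊓ normalizer H).Normal := by
  rw [← normalizer_eq_top_iff, eq_top_iff, ← hH.sup_eq_top]
  refine sup_le (hNab.trans ((centralizer_le inf_le_left).trans (centralizer_le_normalizer _))) ?_
  exact (le_inf le_normalizer_of_normal (le_normalizer.trans le_normalizer)).trans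
    inf_normalizer_le_normalizer_inf

theorem le_center_of_isComplement'_of_le_normalizer [N.Normal] (hNab : N ≤ centralizer N)
    (hH : N.IsComplement' H) (h : N ≤ normalizer H) : N ≤ center G := by
  have := normal_of_isComplement'_of_le_normalizer hH h
  have hNH : N ≤ centralizer H := commutator_eq_bot_iff_le_centralizer.mp
    (le_bot_iff.mp ((commutator_le_inf N H).trans hH.disjoint.le_bot))
  rw [← SetLike.coe_subset_coe, ← centralizer_eq_top_iff_subset, eq_top_iff, ← hH.sup_eq_top]
  exact sup_le hNab (le_centralizer_iff.mp hNH)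

theorem normal_of_le_center (h : K ≤ center G) : K.Normal :=
  ⟨fun k hk g ↦ by rwa [mem_center_iff.mp (h hk) g, mul_inv_cancel_right]⟩

theorem prime_card_of_le_center [Finite G] (hN : N ≠ ⊥)
    (hmin : ∀ K : Subgroup G, K.Normal → K ≤ N → K = ⊥ ∨ K = N) (hc : N ≤ center G) :
    (Nat.card N).Prime := by
  obtain ⟨q, hq, hqN⟩ := Nat.exists_prime_and_dvd (mt card_eq_one.mp hN)
  have := Fact.mk hq
  obtain ⟨y, hy⟩ := exists_prime_orderOf_dvd_card' q hqN
  have hyN : zpowers (y : G) ≤ N := zpowers_le.mpr y.2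
  rcases hmin _ (normal_of_le_center (hyN.trans hc)) hyN with h | h
  · rw [show y = 1 from Subtype.ext (zpowers_eq_bot.mp h), orderOf_one] at hy
    exact absurd hy.symm hq.ne_one
  · rwa [← h, Nat.card_zpowers, orderOf_coe, hy]

theorem isComplement'_ker_of_comp_subtype_eq_id {π : G →* N}
    (hπ : π.comp N.subtype = MonoidHom.id N) : N.IsComplement' π.ker := by
  have hπn (n : N) : π n = n := DFunLike.congr_fun hπ n
  refine isComplement'_of_disjoint_and_mul_eq_univ ?_ ?_
  · refine disjoint_iff_inf_le.mpr fun x ⟨hxN, hxK⟩ ↦ ?_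
    have := congrArg Subtype.val (hπn ⟨x, hxN⟩)
    rwa [MonoidHom.mem_ker.mp hxK, OneMemClass.coe_one, eq_comm] at this
  · refine Set.eq_univ_of_forall fun g ↦
      ⟨π g, (π g).2, (π g : G)⁻¹ * g, ?_, mul_inv_cancel_left _ _⟩
    rw [SetLike.mem_coe, MonoidHom.mem_ker, map_mul, map_inv, hπn, inv_mul_cancel]

theorem eq_of_ker_eq_of_comp_subtype_eq_id {π ψ : G →* N}
    (hπ : π.comp N.subtype = MonoidHom.id N) (hψ : ψ.comp N.subtype = MonoidHom.id N)
    (h : π.ker = ψ.ker) : π = ψ := by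
  have hπn (n : N) : π n = n := DFunLike.congr_fun hπ n
  have hψn (n : N) : ψ n = n := DFunLike.congr_fun hψ n
  ext1 g
  have hk : (π g : G)⁻¹ * g ∈ ψ.ker := by
    rw [← h, MonoidHom.mem_ker, map_mul, map_inv, hπn, inv_mul_cancel]
  calc π g = ψ (π g) * ψ ((π g : G)⁻¹ * g) := by rw [hψn, MonoidHom.mem_ker.mp hk, mul_one]
    _ = ψ g := by rw [← map_mul, mul_inv_cancel_left]

theorem exists_comp_subtype_eq_id_and_ker_eq [K.Normal] (hK : N.IsComplement' K) :
    ∃ π : G →* N, π.comp N.subtype = MonoidHom.id N ∧ π.ker = K := by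
  refine ⟨(hK.QuotientMulEquiv : G ⧸ K →* N).comp (QuotientGroup.mk' K), ?_, ?_⟩
  · ext1 n
    exact (IsComplement.leftQuotientEquiv hK).eq_symm_apply.mp rfl
  · rw [MonoidHom.ker_mulEquiv_comp, QuotientGroup.ker_mk']

open scoped IsMulCommutative in
theorem card_le_card_isComplement'_of_le_center (hc : N ≤ center G) (hq : (Nat.card N).Prime)
    (hb : 1 < Nat.card {K : Subgroup G // N.IsComplement' K}) :
    Nat.card N ≤ Nat.card {K : Subgroup G // N.IsComplement' K} := by
  have := Fact.mk hq
  have : IsMulCommutative N :=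
    le_centralizer_iff_isMulCommutative.mp (hc.trans (center_le_centralizer _))
  have := Nat.finite_of_card_ne_zero (Nat.ne_zero_of_lt hb)
  obtain ⟨⟨K₁, hK₁⟩, ⟨K₂, hK₂⟩, hne⟩ := (Finite.one_lt_card_iff_nontrivial.mp hb).exists_pair_ne
  have hnormal {K : Subgroup G} (hK : N.IsComplement' K) : K.Normal :=
    normal_of_isComplement'_of_le_normalizer hK (hc.trans (center_le_normalizer _))
  have := hnormal hK₁
  have := hnormal hK₂
  obtain ⟨π₁, hπ₁, rfl⟩ := exists_comp_subtype_eq_id_and_ker_eq hK₁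
  obtain ⟨π₂, hπ₂, rfl⟩ := exists_comp_subtype_eq_id_and_ker_eq hK₂
  let restrict : (G →* N) →* (N →* N) := N.subtype.compHom'
  set δ := π₁ / π₂
  have hδN : restrict δ = 1 := by
    rw [map_div, div_eq_one]
    exact hπ₁.trans hπ₂.symm
  have hδ : δ ≠ 1 := fun h ↦ hne (Subtype.ext (congrArg MonoidHom.ker (div_eq_one.mp h)))
  have hδq : δ ^ Nat.card N = 1 := MonoidHom.ext fun g ↦ pow_card_eq_one'
  have hord : orderOf δ = Nat.card N := orderOf_eq_prime hδq hδ
  have hret (i : ℕ) : (δ ^ i * π₂).comp N.subtype = MonoidHom.id N := by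
    change restrict (δ ^ i * π₂) = _
    rw [map_mul, map_pow, hδN, one_pow, one_mul]
    exact hπ₂
  let F (i : Fin (Nat.card N)) : {K : Subgroup G // N.IsComplement' K} :=
    ⟨_, isComplement'_ker_of_comp_subtype_eq_id (hret i)⟩
  have hF : F.Injective := fun i j hij ↦ Fin.ext <|
    pow_injOn_Iio_orderOf (by simp [hord]) (by simp [hord]) <|
      mul_right_cancel <|
        eq_of_ker_eq_of_comp_subtype_eq_id (hret i) (hret j) (congrArg Subtype.val hij)
  simpa using Nat.card_le_card_of_injective F hF

end Subgroup

theorem stmt_19 (G : Type*) [Group G] [Finite G] [Group.IsSolvable G]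
    (N : Subgroup G) [N.Normal] (hN : N ≠ ⊥)
    (hmin : ∀ K : Subgroup G, K.Normal → K ≤ N → K = ⊥ ∨ K = N)
    (hcompl : ∃ H : Subgroup G, N.IsComplement' H)
    (hb : 1 < Nat.card {H : Subgroup G // N.IsComplement' H}) :
    Nat.card N ≤ Nat.card {H : Subgroup G // N.IsComplement' H} := by
  obtain ⟨H, hH⟩ := hcompl
  have hNab := le_centralizer_self_of_minimal_normal hN hmin
  rcases hmin _ (normal_inf_normalizer_of_isComplement' hNab hH) inf_le_left with hP | hP
  · exact card_le_card_isComplement'_of_inf_normalizer_eq_bot hH hP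
  · have hc := le_center_of_isComplement'_of_le_normalizer hNab hH (inf_eq_left.mp hP)
    exact card_le_card_isComplement'_of_le_center hc (prime_card_of_le_center hN hmin hc) hb
end
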